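/- Let F be the free group on a set S of generators, and let (w_i)_{i∈J} be a family of reduced words in F such that for each i there exists a generator s_i ∈ S occurring in w_i (with nonzero exponent) that occurs in no w_j for j ≠ i. Then the family (w_i)_{i∈J} freely generates a free subgroup of F; in particular the w_i satisfy no nontrivial relation. -/

import Mathlib

open FreeGroup List

private def FFRel {α : Type*} (a b : α × Bool) : Prop := ¬(a.1 = b.1 ∧ a.2 = !b.2)

private lemma ff_exists_of_not_chain' {α : Type*} {R : α → α → Prop} :
    ∀ {l : List α}, ¬ List.IsChain R l → ∃ A a b B, l = A ++ a :: b :: B ∧ ¬ R a b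
  | [], h => absurd List.isChain_nil h
  | [a], h => absurd (List.isChain_singleton a) h
  | a :: b :: l, h => by
    rw [List.isChain_cons_cons] at h
    push_neg at h
    by_cases hr : R a b
    · obtain ⟨A, x, y, B, hl, hxy⟩ := ff_exists_of_not_chain' (h hr)
      exact ⟨a :: A, x, y, B, by rw [hl]; rfl, hxy⟩
    · exact ⟨[], a, b, l, rfl, hr⟩

private lemma ff_chain'_reduce {α : Type*} [DecidableEq α] (L : List (α × Bool)) :
    List.IsChain FFRel (FreeGroup.reduce L) := by
  by_contra h
  obtain ⟨A, a, b, B, hl, hab⟩ := ff_exists_of_not_chain' h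
  rw [FFRel, not_not] at hab
  have hb : b = (a.1, !a.2) := Prod.ext hab.1.symm (by rw [hab.2, Bool.not_not])
  have ha : a = (a.1, a.2) := rfl
  rw [ha, hb] at hl
  exact FreeGroup.reduce.not hl

private lemma ff_reduce_eq_self {α : Type*} [DecidableEq α] :
    ∀ {L : List (α × Bool)}, List.IsChain FFRel L → FreeGroup.reduce L = L
  | [], _ => rfl
  | [x], _ => rfl
  | x :: y :: L, h => by
    rw [List.isChain_cons_cons] at h
    rw [FreeGroup.reduce.cons, ff_reduce_eq_self h.2]
    simp only []
    rw [if_neg h.1]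

private lemma ff_chain'_toWord {α : Type*} [DecidableEq α] (x : FreeGroup α) :
    List.IsChain FFRel x.toWord := by
  rw [← FreeGroup.reduce_toWord]
  exact ff_chain'_reduce _

private lemma ff_invRev_concat {α : Type*} (C : List (α × Bool)) (x : α × Bool) :
    FreeGroup.invRev (C ++ [x]) = (x.1, !x.2) :: FreeGroup.invRev C := by
  simp [FreeGroup.invRev]

private lemma ff_cancel_aux {α : Type*} [DecidableEq α] :
    ∀ (n : ℕ) (L1 L2 : List (α × Bool)), L1.length ≤ n →
    List.IsChain FFRel L1 → List.IsChain FFRel L2 →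
    ∃ A C D, L1 = A ++ C ∧ L2 = FreeGroup.invRev C ++ D ∧
      FreeGroup.reduce (L1 ++ L2) = A ++ D := by
  intro n
  induction n with
  | zero =>
    intro L1 L2 hlen h1 h2
    have hlen2 : L1.length = 0 := Nat.le_zero.mp hlen
    rw [List.length_eq_zero_iff] at hlen2
    rename_i _; subst hlen2

    exact ⟨[], [], L2, rfl, by simp [FreeGroup.invRev], by simpa using ff_reduce_eq_self h2⟩
  | succ n ih =>
    intro L1 L2 hlen h1 h2
    by_cases hc : List.IsChain FFRel (L1 ++ L2)
    · exact ⟨L1, [], L2, by simp, by simp [FreeGroup.invRev], ff_reduce_eq_self hc⟩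
    · rw [List.isChain_append] at hc
      push_neg at hc
      obtain ⟨x, hx, y, hy, hxy⟩ := hc h1 h2
      have hL1ne : L1 ≠ [] := by rintro rfl; simp at hx
      have hL2ne : L2 ≠ [] := by rintro rfl; simp at hy
      have hx' : x = L1.getLast hL1ne := by
        rw [List.getLast?_eq_getLast hL1ne] at hx; exact (Option.mem_some_iff.mp hx).symm
      have hy' : y = L2.head hL2ne := by
        rw [List.head?_eq_head hL2ne] at hy; exact (Option.mem_some_iff.mp hy).symm
      rw [FFRel, not_not] at hxy
      have hyx : y = (x.1, !x.2) := Prod.ext hxy.1.symm (by rw [hxy.2, Bool.not_not])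
      have hL1 : L1 = L1.dropLast ++ [x] := by
        rw [hx']; exact (List.dropLast_append_getLast hL1ne).symm
      have hL2 : L2 = (x.1, !x.2) :: L2.tail := by
        rw [← hyx, hy']; exact (List.cons_head_tail hL2ne).symm
      have hstep : FreeGroup.Red.Step (L1 ++ L2) (L1.dropLast ++ L2.tail) := by
        nth_rewrite 1 [hL1, hL2]
        have : L1.dropLast ++ [x] ++ ((x.1, !x.2) :: L2.tail)
            = L1.dropLast ++ (x.1, x.2) :: (x.1, !x.2) :: L2.tail := by simp
        rw [this]
        exact FreeGroup.Red.Step.not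
      have hlen' : L1.dropLast.length ≤ n := by
        have := List.length_dropLast (xs := L1)
        have hpos : 0 < L1.length := List.length_pos_iff.mpr hL1ne
        omega
      have h1' : List.IsChain FFRel L1.dropLast :=
        h1.prefix (List.dropLast_prefix L1)
      obtain ⟨A, C, D, hA, hC, hred⟩ := ih L1.dropLast L2.tail hlen' h1' h2.tail
      refine ⟨A, C ++ [x], D, ?_, ?_, ?_⟩
      · rw [hL1, hA, List.append_assoc]
      · rw [hL2, ff_invRev_concat, hC]; rfl
      · rw [FreeGroup.reduce.Step.eq hstep]; exact hred

private lemma ff_cancel {α : Type*} [DecidableEq α] (L1 L2 : List (α × Bool))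
    (h1 : List.IsChain FFRel L1) (h2 : List.IsChain FFRel L2) :
    ∃ A C D, L1 = A ++ C ∧ L2 = FreeGroup.invRev C ++ D ∧
      FreeGroup.reduce (L1 ++ L2) = A ++ D :=
  ff_cancel_aux L1.length L1 L2 le_rfl h1 h2

private lemma ff_invRev_cons {α : Type*} (C : List (α × Bool)) (x : α × Bool) :
    FreeGroup.invRev (x :: C) = FreeGroup.invRev C ++ [(x.1, !x.2)] := by
  simp [FreeGroup.invRev]

private lemma ff_ffrel_self {α : Type*} (u : α × Bool) : FFRel u u := by
  rintro ⟨-, h2⟩; simp at h2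

private lemma ff_cyc {α : Type*} :
    ∀ (n : ℕ) (U : List (α × Bool)), U.length ≤ n → List.IsChain FFRel U →
    ∃ C R, U = C ++ R ++ FreeGroup.invRev C ∧ (U ≠ [] → R ≠ []) ∧
      List.IsChain FFRel (R ++ R) := by
  intro n
  induction n with
  | zero =>
    intro U hlen _
    have : U = [] := List.length_eq_zero_iff.mp (Nat.le_zero.mp hlen)
    subst this
    exact ⟨[], [], by simp [FreeGroup.invRev], by simp, List.isChain_nil⟩
  | succ n ih =>
    intro U hlen hU
    rcases eq_or_ne U [] with rfl | hne
    · exact ⟨[], [], by simp [FreeGroup.invRev], by simp, List.isChain_nil⟩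
    obtain ⟨u, t, rfl⟩ := List.exists_cons_of_ne_nil hne
    set x := (u :: t).getLast (by simp) with hxdef
    by_cases hR : FFRel x u
    · refine ⟨[], u :: t, by simp [FreeGroup.invRev], fun _ => by simp, ?_⟩
      rw [List.isChain_append]
      refine ⟨hU, hU, ?_⟩
      intro a ha b hb
      rw [List.getLast?_eq_getLast (by simp)] at ha
      simp only [List.head?_cons, Option.mem_some_iff] at hb ha
      rw [← ha, ← hb]
      exact hR
    · rw [FFRel, not_not] at hR
      have hx : x = (u.1, !u.2) := Prod.ext hR.1 hR.2
      have ht : t ≠ [] := by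
        rintro rfl
        simp only [List.getLast_singleton] at hxdef
        have : u.2 = !u.2 := by
          have := congrArg Prod.snd (hxdef.symm.trans hx); simpa using this
        simp at this
      have htx : t = t.dropLast ++ [x] := by
        rw [hxdef, List.getLast_cons ht]
        exact (List.dropLast_append_getLast ht).symm
      set M := t.dropLast with hM
      have hUeq : u :: t = [u] ++ M ++ [x] := by rw [← htx.symm]; simp [htx]
      have hMchain : List.IsChain FFRel M := hU.infix ⟨[u], [x], by simpa using hUeq.symm⟩
      have hMlen : M.length ≤ n := by
        have h1 : t.length ≤ n := by simpa using hlen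
        have := List.length_dropLast (xs := t)
        have : M.length = t.length - 1 := by simp [hM]
        have hpos : 0 < t.length := List.length_pos_iff.mpr ht
        omega
      obtain ⟨C, R, hMeq, hRne, hRR⟩ := ih M hMlen hMchain
      have hMne : M ≠ [] := by
        rintro hM0
        rw [hM0] at hUeq
        simp only [List.nil_append, List.append_nil] at hUeq
        have hcontr : FFRel u (u.1, !u.2) := by
          rw [hUeq] at hU; simpa [hx] using hU
        exact hcontr ⟨rfl, (Bool.not_not u.2).symm⟩
      refine ⟨u :: C, R, ?_, fun _ => hRne hMne, hRR⟩
      rw [hUeq, hMeq, ff_invRev_cons, ← hx]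
      simp only [List.append_assoc, List.cons_append, List.nil_append]

private lemma ff_pow_chain {α : Type*} {R : List (α × Bool)} (hne : R ≠ [])
    (hRR : List.IsChain FFRel (R ++ R)) :
    ∀ n : ℕ, List.IsChain FFRel ((List.replicate (n+1) R).flatten) ∧
      ((List.replicate (n+1) R).flatten).head? = R.head? ∧
      ((List.replicate (n+1) R).flatten).getLast? = R.getLast? := by
  have hRchain : List.IsChain FFRel R := (List.isChain_append.mp hRR).1
  have hjunc := (List.isChain_append.mp hRR).2.2
  intro n
  induction n with
  | zero => exact ⟨by simpa using hRchain, by simp, by simp⟩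
  | succ n ih =>
    have hJeq : (List.replicate (n+2) R).flatten = R ++ (List.replicate (n+1) R).flatten := by
      simp [List.replicate_succ]
    have hJne : (List.replicate (n+1) R).flatten ≠ [] := by
      intro h0
      have := ih.2.1
      rw [h0] at this
      exact hne (List.head?_eq_none_iff.mp this.symm)
    refine ⟨?_, ?_, ?_⟩
    · rw [hJeq, List.isChain_append]
      exact ⟨hRchain, ih.1, fun x hx y hy => hjunc x hx y (by rw [ih.2.1] at hy; exact hy)⟩
    · rw [hJeq, List.head?_append_of_ne_nil _ hne]
    · rw [hJeq, List.getLast?_append_of_ne_nil _ hJne, ih.2.2]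

private lemma ff_mk_join_replicate {α : Type*} (R : List (α × Bool)) (n : ℕ) :
    FreeGroup.mk ((List.replicate (n+1) R).flatten) = (FreeGroup.mk R) ^ (n+1) := by
  induction n with
  | zero => simp
  | succ n ih =>
    have hJeq : (List.replicate (n+2) R).flatten = R ++ (List.replicate (n+1) R).flatten := by
      simp [List.replicate_succ]
    rw [hJeq, ← FreeGroup.mul_mk, ih, pow_succ, pow_succ]
    group

private lemma ff_mem_pow {α : Type*} [DecidableEq α] (z : FreeGroup α) (n : ℕ) (s : α)
    (hs : s ∈ z.toWord.map Prod.fst) : s ∈ (z ^ (n+1)).toWord.map Prod.fst := by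
  classical
  set U := z.toWord with hUdef
  have hUchain : List.IsChain FFRel U := ff_chain'_toWord z
  have hUne : U ≠ [] := by rintro h0; rw [h0] at hs; simp at hs
  obtain ⟨C, R, hUeq, hRne', hRR⟩ := ff_cyc U.length U le_rfl hUchain
  have hRne : R ≠ [] := hRne' hUne
  set J := (List.replicate (n+1) R).flatten with hJdef
  obtain ⟨hJchain, hJhead, hJlast⟩ := ff_pow_chain hRne hRR n
  have hJne : J ≠ [] := by
    intro h0
    rw [← hJdef, h0] at hJhead
    exact hRne (List.head?_eq_none_iff.mp hJhead.symm)
  -- group identities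
  have hz : z = FreeGroup.mk C * FreeGroup.mk R * (FreeGroup.mk C)⁻¹ := by
    rw [FreeGroup.inv_mk, FreeGroup.mul_mk, FreeGroup.mul_mk, ← hUeq, hUdef,
      FreeGroup.mk_toWord]
  have hzpow : z ^ (n+1) = FreeGroup.mk ((C ++ J) ++ FreeGroup.invRev C) := by
    rw [hz, conj_pow, ← ff_mk_join_replicate, FreeGroup.inv_mk, FreeGroup.mul_mk,
      FreeGroup.mul_mk, hJdef]
  -- chain conditions from U
  have h1 := List.isChain_append.mp (hUeq ▸ hUchain)
  have h2 := List.isChain_append.mp h1.1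
  have hWchain : List.IsChain FFRel ((C ++ J) ++ FreeGroup.invRev C) := by
    rw [List.isChain_append]
    refine ⟨?_, h1.2.1, ?_⟩
    · rw [List.isChain_append]
      refine ⟨h2.1, hJchain, fun x hx y hy => h2.2.2 x hx y (by rw [hJhead] at hy; exact hy)⟩
    · intro x hx y hy
      refine h1.2.2 x ?_ y hy
      rw [List.getLast?_append_of_ne_nil _ hJne, hJlast] at hx
      rw [List.getLast?_append_of_ne_nil _ hRne]
      exact hx
  have hW : (z ^ (n+1)).toWord = (C ++ J) ++ FreeGroup.invRev C := by
    rw [hzpow, FreeGroup.toWord_mk, ff_reduce_eq_self hWchain]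
  rw [hW]
  rw [hUeq] at hs
  have hJR : J = R ++ (List.replicate n R).flatten := by simp [hJdef, List.replicate_succ]
  simp only [List.map_append, List.mem_append] at hs ⊢
  rcases hs with (h | h) | h
  · exact Or.inl (Or.inl h)
  · refine Or.inl (Or.inr ?_)
    have : s ∈ List.map Prod.fst J := by
      rw [hJR]; simp only [List.map_append, List.mem_append]; exact Or.inl h
    exact this
  · exact Or.inr h

private lemma ff_base_inv {α : Type*} [DecidableEq α] (x : FreeGroup α) (s : α) :
    s ∈ x⁻¹.toWord.map Prod.fst ↔ s ∈ x.toWord.map Prod.fst := by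
  rw [FreeGroup.toWord_inv]
  simp [FreeGroup.invRev]

private lemma ff_base_mul {α : Type*} [DecidableEq α] {x y : FreeGroup α} {s : α}
    (hs : s ∈ (x * y).toWord.map Prod.fst) :
    s ∈ x.toWord.map Prod.fst ∨ s ∈ y.toWord.map Prod.fst := by
  have hsub := (FreeGroup.toWord_mul_sublist x y).map Prod.fst
  have := hsub.mem hs
  rw [List.map_append, List.mem_append] at this
  exact this

private lemma ff_base_pow {α : Type*} [DecidableEq α] {z : FreeGroup α} {s : α} :
    ∀ n : ℕ, s ∈ (z ^ n).toWord.map Prod.fst → s ∈ z.toWord.map Prod.fst := by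
  intro n
  induction n with
  | zero => intro h; rw [pow_zero, FreeGroup.toWord_one] at h; simp at h
  | succ n ih =>
    intro h
    rw [pow_succ] at h
    rcases ff_base_mul h with h | h
    · exact ih h
    · exact h

private lemma ff_last_occ {α β : Type*} [DecidableEq α] {a : α} :
    ∀ {l : List (α × β)}, a ∈ l.map Prod.fst →
    ∃ A c B, l = A ++ (a, c) :: B ∧ a ∉ B.map Prod.fst := by
  intro l
  induction l with
  | nil => intro h; simp at h
  | cons x t ih =>
    intro h
    by_cases ht : a ∈ t.map Prod.fst
    · obtain ⟨A, c, B, hl, hB⟩ := ih ht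
      exact ⟨x :: A, c, B, by rw [hl]; rfl, hB⟩
    · have hx : x.1 = a := by
        simp only [List.map_cons, List.mem_cons] at h
        tauto
      exact ⟨[], x.2, t, by simp [← hx], ht⟩

private lemma ff_run {β : Type*} [DecidableEq β] (L : List β) (h : L ≠ []) :
    ∃ M x r, L = M ++ List.replicate (r+1) x ∧ ∀ y ∈ M.getLast?, y ≠ x := by
  induction L using List.reverseRecOn with
  | nil => exact absurd rfl h
  | append_singleton M' x ih =>
    rcases eq_or_ne M' [] with rfl | hne
    · exact ⟨[], x, 0, by simp, by simp⟩
    obtain ⟨M, y, r, hEq, hLast⟩ := ih hne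
    by_cases hyx : y = x
    · subst hyx
      refine ⟨M, y, r + 1, ?_, hLast⟩
      rw [hEq, List.append_assoc, ← List.replicate_succ' (n := r+1) (a := y)]
    · refine ⟨M', x, 0, by simp, ?_⟩
      intro z hz
      rw [hEq, List.getLast?_append_of_ne_nil _ (by simp), List.replicate_succ',
        List.getLast?_concat] at hz
      simp only [Option.mem_some_iff] at hz
      subst hz
      exact hyx

private lemma ff_mk_replicate {α : Type*} (i : α) (b : Bool) :
    ∀ n : ℕ, FreeGroup.mk (List.replicate n (i, b))
      = (cond b (FreeGroup.of i) (FreeGroup.of i)⁻¹) ^ n := by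
  intro n
  induction n with
  | zero => simp [FreeGroup.one_eq_mk]
  | succ n ih =>
    rw [List.replicate_succ, show ((i,b) :: List.replicate n (i,b))
        = [(i,b)] ++ List.replicate n (i,b) from rfl, ← FreeGroup.mul_mk, ih, pow_succ']
    congr 1
    cases b
    · show FreeGroup.mk [(i, false)] = (FreeGroup.of i)⁻¹
      rw [show FreeGroup.of i = FreeGroup.mk [(i, true)] from rfl, FreeGroup.inv_mk]
      rfl
    · rfl

private lemma ff_base_invRev {α : Type*} (C : List (α × Bool)) :
    (FreeGroup.invRev C).map Prod.fst = (C.map Prod.fst).reverse := by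
  simp [FreeGroup.invRev]

/-- If each member `w i` of a family of elements of a free group contains, in its
reduced word, a generator occurring in no other member of the family, then the
family freely generates a free subgroup: the induced homomorphism from the free
group on the index set is injective. -/
theorem free_family_of_private_generators {S : Type*} [DecidableEq S]
    {J : Type*} (w : J → FreeGroup S)
    (h : ∀ i : J, ∃ s : S,
      s ∈ ((w i).toWord.map Prod.fst) ∧
      ∀ j : J, j ≠ i → s ∉ ((w j).toWord.map Prod.fst)) :
    Function.Injective (FreeGroup.lift w : FreeGroup J →* FreeGroup S) := by
  classical
  choose p hp1 hp2 using h
  have main : ∀ (n : ℕ) (L : List (J × Bool)), L.length ≤ n → List.IsChain FFRel L →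
      ∀ x : J × Bool, L.getLast? = some x →
      ∃ A c B, (FreeGroup.lift w (FreeGroup.mk L)).toWord
          = A ++ (p x.1, c) :: B ∧ ∀ j : J, p j ∉ B.map Prod.fst := by
    intro n
    induction n with
    | zero =>
      intro L hlen _ x hx
      have : L = [] := List.length_eq_zero_iff.mp (Nat.le_zero.mp hlen)
      subst this; simp at hx
    | succ n ih =>
      intro L hlen hL x hx
      have hLne : L ≠ [] := by rintro rfl; simp at hx
      obtain ⟨M, x', r, hLeq, hMlast⟩ := ff_run L hLne
      have hx'x : x' = x := by
        rw [hLeq, List.getLast?_append_of_ne_nil _ (by simp),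
          List.replicate_succ', List.getLast?_concat] at hx
        exact Option.some.inj hx
      subst hx'x
      obtain ⟨i, b⟩ := x'
      set z : FreeGroup S := cond b (w i) (w i)⁻¹ with hzdef
      set v : FreeGroup S := z ^ (r+1) with hvdef
      have hbase_z : p i ∈ z.toWord.map Prod.fst := by
        cases b
        · simpa [hzdef] using (ff_base_inv (w i) (p i)).mpr (hp1 i)
        · simpa [hzdef] using hp1 i
      have hbase_z' : ∀ j, j ≠ i → p j ∉ z.toWord.map Prod.fst := by
        intro j hj hmem
        have hmem' : p j ∈ (w i).toWord.map Prod.fst := by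
          cases b
          · exact (ff_base_inv (w i) (p j)).mp (by simpa [hzdef] using hmem)
          · simpa [hzdef] using hmem
        exact hp2 j i (Ne.symm hj) hmem'
      have hv1 : p i ∈ v.toWord.map Prod.fst := ff_mem_pow z r (p i) hbase_z
      have hv2 : ∀ j, j ≠ i → p j ∉ v.toWord.map Prod.fst := fun j hj hm =>
        hbase_z' j hj (ff_base_pow (r+1) hm)
      have hlift : FreeGroup.lift w (FreeGroup.mk L)
          = FreeGroup.lift w (FreeGroup.mk M) * v := by
        rw [hLeq, ← FreeGroup.mul_mk, MonoidHom.map_mul]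
        congr 1
        rw [ff_mk_replicate i b (r+1), MonoidHom.map_pow, hvdef]
        congr 1
        cases b
        · simp [hzdef]
        · simp [hzdef]
      rcases eq_or_ne M [] with rfl | hMne
      · rw [← FreeGroup.one_eq_mk, MonoidHom.map_one, one_mul] at hlift
        obtain ⟨A, c, B, hEq, hB⟩ := ff_last_occ hv1
        refine ⟨A, c, B, by rw [hlift, hEq], ?_⟩
        intro j hj
        rcases eq_or_ne j i with rfl | hji
        · exact hB hj
        · exact hv2 j hji (by
            rw [hEq]
            simp only [List.map_append, List.map_cons, List.mem_append, List.mem_cons]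
            exact Or.inr (Or.inr hj))
      · have hy' : M.getLast? = some (M.getLast hMne) := List.getLast?_eq_getLast hMne
        set y := M.getLast hMne with hydef
        have hyne : y ≠ (i, b) := hMlast y hy'
        have hjunc : FFRel y (i, b) := by
          rw [hLeq, List.isChain_append] at hL
          refine hL.2.2 y hy' (i, b) ?_
          rw [List.replicate_succ]
          exact rfl
        have hyi : y.1 ≠ i := by
          intro h1
          apply hyne
          have h2 : y.2 = b := by
            by_contra h2
            exact hjunc ⟨h1, by cases hb2 : y.2 <;> cases hbb : b <;> simp_all⟩
          exact Prod.ext h1 h2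
        have hMlen : M.length ≤ n := by
          have := congrArg List.length hLeq
          simp only [List.length_append, List.length_replicate] at this
          omega
        have hMchain : List.IsChain FFRel M := hL.prefix ⟨_, hLeq.symm⟩
        obtain ⟨A', c', B', hQ, hB'⟩ := ih M hMlen hMchain y hy'
        set Q := FreeGroup.lift w (FreeGroup.mk M) with hQdef
        obtain ⟨A, C, D, hQeq, hVeq, hred⟩ :=
          ff_cancel Q.toWord v.toWord (ff_chain'_toWord Q) (ff_chain'_toWord v)
        have hprod : (Q * v).toWord = A ++ D := by
          rw [show Q * v = FreeGroup.mk (Q.toWord ++ v.toWord) by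
              rw [← FreeGroup.mul_mk, FreeGroup.mk_toWord, FreeGroup.mk_toWord],
            FreeGroup.toWord_mk, hred]
        have hCbase : ∀ s : S, s ∈ C.map Prod.fst → s ∈ v.toWord.map Prod.fst := by
          intro s hs
          rw [hVeq]
          simp only [List.map_append, List.mem_append]
          left
          rw [ff_base_invRev, List.mem_reverse]
          exact hs
        have hDi : p i ∈ D.map Prod.fst := by
          by_contra hDi
          have hCi : p i ∈ C.map Prod.fst := by
            have hmem := hv1
            rw [hVeq] at hmem
            simp only [List.map_append, List.mem_append] at hmem
            rcases hmem with hm | hm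
            · rw [ff_base_invRev, List.mem_reverse] at hm; exact hm
            · exact absurd hm hDi
          have hsC : C <:+ Q.toWord := ⟨A, hQeq.symm⟩
          have hsB : (p y.1, c') :: B' <:+ Q.toWord := ⟨A', hQ.symm⟩
          rcases List.suffix_or_suffix_of_suffix hsC hsB with hcb | hbc
          · rw [List.suffix_cons_iff] at hcb
            rcases hcb with hceq | hcB'
            · have hmem : p y.1 ∈ C.map Prod.fst := by rw [hceq]; simp
              exact hv2 y.1 hyi (hCbase _ hmem)
            · have hmem : p i ∈ B'.map Prod.fst := ((hcB'.sublist).map Prod.fst).subset hCi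
              exact hB' i hmem
          · have hmem : p y.1 ∈ C.map Prod.fst :=
              ((hbc.sublist).map Prod.fst).subset (by simp)
            exact hv2 y.1 hyi (hCbase _ hmem)
        have hDsub : ∀ s : S, s ∈ D.map Prod.fst → s ∈ v.toWord.map Prod.fst := by
          intro s hs
          rw [hVeq]
          simp only [List.map_append, List.mem_append]
          exact Or.inr hs
        obtain ⟨D1, c, D2, hDeq, hD2⟩ := ff_last_occ hDi
        refine ⟨A ++ D1, c, D2, ?_, ?_⟩
        · rw [hlift, hprod, hDeq, List.append_assoc]
        · intro j hj
          rcases eq_or_ne j i with rfl | hji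
          · exact hD2 hj
          · refine hv2 j hji (hDsub _ ?_)
            rw [hDeq]
            simp only [List.map_append, List.map_cons, List.mem_append, List.mem_cons]
            exact Or.inr (Or.inr hj)
  rw [injective_iff_map_eq_one]
  intro x hx1
  by_contra hxne
  have hLne : x.toWord ≠ [] := fun h0 => hxne (FreeGroup.toWord_eq_nil_iff.mp h0)
  obtain ⟨A, c, B, hEq, -⟩ := main x.toWord.length x.toWord le_rfl (ff_chain'_toWord x)
    (x.toWord.getLast hLne) (List.getLast?_eq_getLast hLne)
  rw [FreeGroup.mk_toWord, hx1, FreeGroup.toWord_one] at hEq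
  simp at hEq
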